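/- Let f : ℝ^n → ℝ and g : ℝ^n → ℝ be convex, L_f- and L_g-smooth respectively, and let A ∈ ℝ^{n×n} satisfy μ_A = λ_min(AᵀA) = λ_min(AAᵀ) > 0. Then the saddle-point operator F(x,y) = (∇f(x)+Aᵀy, ∇g(y)-Ax) is (1/R₃)-inverse Lipschitz for some R₃ > 0: there exists c > 0 with ‖F(ω)-F(ω')‖ ≥ c‖ω-ω'‖ for all ω, ω' ∈ ℝ^{2n}. -/

import Mathlib

noncomputable section
open Matrix

abbrev Evec (n : ℕ) := EuclideanSpace ℝ (Fin n)

noncomputable def qform {ι : Type*} [Fintype ι] [DecidableEq ι]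
    (M : Matrix ι ι ℝ) (v : EuclideanSpace ℝ ι) : ℝ :=
  inner ℝ (Matrix.toEuclideanLin M v) v

/-- The smallest eigenvalue of a symmetric matrix, via the Rayleigh quotient. -/
noncomputable def lambdaMin {ι : Type*} [Fintype ι] [DecidableEq ι]
    (M : Matrix ι ι ℝ) : ℝ :=
  ⨅ v : Metric.sphere (0 : EuclideanSpace ℝ ι) 1, qform M (v : EuclideanSpace ℝ ι)

/-!
Write `F = G + J` with `G(x, y) = (∇f x, ∇g y)` and the skew-adjoint coupling
`J(a, b) = (Aᵀb, -Aa)`. By the Baillon–Haddad theorem `G` is `L`-cocoercive for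
`L = max(L_f, L_g, 1)`, and pairing `F ω - F ω'` with `Ψ_ε δ = δ + ε J δ`, where
`δ = ω - ω'` and `ε = 2 / L`, gives
`⟪F ω - F ω', Ψ_ε δ⟫ ≥ ‖J δ‖² / L ≥ (μ / L) ‖δ‖²` with `μ = λ_min(AᵀA) = λ_min(AAᵀ)`.
Since `‖Ψ_ε δ‖ ≤ (1 + ε ‖A‖) ‖δ‖`, Cauchy–Schwarz yields `μ ‖δ‖ ≤ (L + 2 ‖A‖) ‖F ω - F ω'‖`.
-/

open RealInnerProductSpace WithLp
open scoped InnerProduct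

section Rayleigh

variable {ι : Type*} [Fintype ι] [DecidableEq ι]

theorem qform_smul (M : Matrix ι ι ℝ) (c : ℝ) (v : EuclideanSpace ℝ ι) :
    qform M (c • v) = c ^ 2 * qform M v := by
  rw [qform, qform, map_smul, inner_smul_left, inner_smul_right]
  simp only [conj_trivial]
  ring

theorem continuous_qform (M : Matrix ι ι ℝ) : Continuous (qform M) := by
  unfold qform
  fun_prop

theorem lambdaMin_mul_sq_norm_le_qform (M : Matrix ι ι ℝ) (v : EuclideanSpace ℝ ι) :
    lambdaMin M * ‖v‖ ^ 2 ≤ qform M v := by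
  rcases eq_or_ne v 0 with rfl | hv
  · simp [qform]
  have hv' : 0 < ‖v‖ := norm_pos_iff.2 hv
  have hbdd : BddBelow
      (Set.range fun w : Metric.sphere (0 : EuclideanSpace ℝ ι) 1 => qform M w) := by
    rw [← Set.image_eq_range]
    exact (isCompact_sphere 0 1).bddBelow_image (continuous_qform M).continuousOn
  have hmem : ‖v‖⁻¹ • v ∈ Metric.sphere (0 : EuclideanSpace ℝ ι) 1 := by
    simp [norm_smul, hv'.ne']
  have := ciInf_le hbdd ⟨_, hmem⟩
  rwa [qform_smul, inv_pow, ← div_eq_inv_mul, le_div_iff₀ (by positivity)] at this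

theorem qform_transpose_mul_self {m : Type*} [Fintype m] [DecidableEq m] (A : Matrix m ι ℝ)
    (v : EuclideanSpace ℝ ι) :
    qform (Aᵀ * A) v = ‖toEuclideanLin A v‖ ^ 2 := by
  rw [qform, ← conjTranspose_eq_transpose_of_trivial, toLpLin_mul_same, LinearMap.comp_apply,
    toEuclideanLin_conjTranspose_eq_adjoint, LinearMap.adjoint_inner_left,
    real_inner_self_eq_norm_sq]

theorem lambdaMin_transpose_mul_mul_sq_norm_le {m : Type*} [Fintype m] [DecidableEq m]
    (A : Matrix m ι ℝ) (v : EuclideanSpace ℝ ι) :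
    lambdaMin (Aᵀ * A) * ‖v‖ ^ 2 ≤ ‖toEuclideanLin A v‖ ^ 2 :=
  (lambdaMin_mul_sq_norm_le_qform _ v).trans_eq (qform_transpose_mul_self A v)

end Rayleigh

theorem sub_le_of_hasDerivAt_le_affine {φ φ' : ℝ → ℝ} (hφ : ∀ t, HasDerivAt φ (φ' t) t)
    {a b : ℝ} (hle : ∀ t, 0 < t → φ' t ≤ a + b * t) : φ 1 - φ 0 ≤ a + b / 2 := by
  have hderiv (t : ℝ) :
      HasDerivAt (fun t => φ t - a * t - b / 2 * t ^ 2) (φ' t - a - b * t) t := by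
    refine (((hφ t).fun_sub ((hasDerivAt_id t).const_mul a)).fun_sub
      ((hasDerivAt_pow 2 t).const_mul (b / 2))).congr_deriv ?_
    simp only [mul_one]
    ring
  have hanti : AntitoneOn (fun t => φ t - a * t - b / 2 * t ^ 2) (Set.Ici 0) :=
    antitoneOn_of_hasDerivWithinAt_nonpos (convex_Ici 0)
      (fun t _ => (hderiv t).continuousAt.continuousWithinAt)
      (fun t _ => (hderiv t).hasDerivWithinAt)
      (fun t ht => by rw [interior_Ici] at ht; linarith [hle t ht])
  have := hanti Set.self_mem_Ici (Set.mem_Ici.2 zero_le_one) zero_le_one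
  simp only [mul_zero, mul_one, sub_zero, one_pow, ne_eq, OfNat.ofNat_ne_zero,
    not_false_eq_true, zero_pow] at this
  linarith

def IsCocoercive {E : Type*} [NormedAddCommGroup E] [InnerProductSpace ℝ E] (L : ℝ)
    (F : E → E) : Prop :=
  ∀ x y, ‖F x - F y‖ ^ 2 ≤ L * ⟪F x - F y, x - y⟫

section Gradient

variable {E : Type*} [NormedAddCommGroup E] [InnerProductSpace ℝ E] [CompleteSpace E]
  {f : E → ℝ} {f' : E → E}

theorem hasDerivAt_comp_add_smul (hf : ∀ x, HasGradientAt f (f' x) x) (x d : E) (t : ℝ) :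
    HasDerivAt (fun s : ℝ => f (x + s • d)) ⟪f' (x + t • d), d⟫ t := by
  have hline : HasDerivAt (fun s : ℝ => x + s • d) d t := by
    simpa using ((hasDerivAt_id t).smul_const d).const_add x
  exact (hf (x + t • d)).hasFDerivAt.comp_hasDerivAt t hline

theorem add_inner_le_of_monotone_gradient (hf : ∀ x, HasGradientAt f (f' x) x)
    (hmono : ∀ x y, 0 ≤ ⟪f' x - f' y, x - y⟫) (x d : E) :
    f x + ⟪f' x, d⟫ ≤ f (x + d) := by
  have hle (t : ℝ) (ht : 0 < t) : -⟪f' (x + t • d), d⟫ ≤ -⟪f' x, d⟫ + 0 * t := by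
    have := hmono (x + t • d) x
    rw [add_sub_cancel_left, inner_smul_right, inner_sub_left] at this
    nlinarith
  have := sub_le_of_hasDerivAt_le_affine (fun t => (hasDerivAt_comp_add_smul hf x d t).neg) hle
  simp only [Pi.neg_apply, one_smul, zero_smul, add_zero, zero_div] at this
  linarith

theorem le_add_inner_add_of_lipschitz_gradient (hf : ∀ x, HasGradientAt f (f' x) x) {L : ℝ}
    (hlip : ∀ x y, ‖f' x - f' y‖ ≤ L * ‖x - y‖) (x d : E) :
    f (x + d) ≤ f x + ⟪f' x, d⟫ + L / 2 * ‖d‖ ^ 2 := by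
  have hle (t : ℝ) (ht : 0 < t) : ⟪f' (x + t • d), d⟫ ≤ ⟪f' x, d⟫ + L * ‖d‖ ^ 2 * t := by
    have hcs := real_inner_le_norm (f' (x + t • d) - f' x) d
    have hlipt := hlip (x + t • d) x
    rw [add_sub_cancel_left, norm_smul, Real.norm_of_nonneg ht.le] at hlipt
    rw [inner_sub_left] at hcs
    nlinarith [norm_nonneg d]
  have := sub_le_of_hasDerivAt_le_affine (hasDerivAt_comp_add_smul hf x d) hle
  simp only [one_smul, zero_smul, add_zero] at this
  linarith

theorem sq_norm_sub_div_le_of_lipschitz_gradient (hf : ∀ x, HasGradientAt f (f' x) x)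
    (hmono : ∀ x y, 0 ≤ ⟪f' x - f' y, x - y⟫) {L : ℝ} (hL : 0 < L)
    (hlip : ∀ x y, ‖f' x - f' y‖ ≤ L * ‖x - y‖) (x y : E) :
    ‖f' x - f' y‖ ^ 2 / (2 * L) ≤ f x - f y - ⟪f' y, x - y⟫ := by
  set u := f' x - f' y
  -- compare both first-order bounds at the gradient step `x - u / L`
  have hdesc := le_add_inner_add_of_lipschitz_gradient hf hlip x (-L⁻¹ • u)
  have hlow := add_inner_le_of_monotone_gradient hf hmono y (x - y + -L⁻¹ • u)
  rw [show y + (x - y + -L⁻¹ • u) = x + -L⁻¹ • u by abel, inner_add_right,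
    inner_smul_right] at hlow
  rw [inner_smul_right, norm_smul, mul_pow, norm_neg, norm_inv,
    Real.norm_of_nonneg hL.le] at hdesc
  have hu : L⁻¹ * ⟪f' x, u⟫ - L⁻¹ * ⟪f' y, u⟫ = L⁻¹ * ‖u‖ ^ 2 := by
    rw [← mul_sub, ← inner_sub_left, real_inner_self_eq_norm_sq]
  have hsplit : ‖u‖ ^ 2 / (2 * L) = L⁻¹ * ‖u‖ ^ 2 - L / 2 * (L⁻¹ ^ 2 * ‖u‖ ^ 2) := by
    field_simp
    ring
  linarith

theorem isCocoercive_of_lipschitz_gradient (hf : ∀ x, HasGradientAt f (f' x) x)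
    (hmono : ∀ x y, 0 ≤ ⟪f' x - f' y, x - y⟫) {L : ℝ} (hL : 0 < L)
    (hlip : ∀ x y, ‖f' x - f' y‖ ≤ L * ‖x - y‖) :
    IsCocoercive L f' := by
  intro x y
  have hxy := sq_norm_sub_div_le_of_lipschitz_gradient hf hmono hL hlip x y
  have hyx := sq_norm_sub_div_le_of_lipschitz_gradient hf hmono hL hlip y x
  rw [norm_sub_rev, ← neg_sub x y, inner_neg_right] at hyx
  have hhalf : ‖f' x - f' y‖ ^ 2 =
      L * (‖f' x - f' y‖ ^ 2 / (2 * L) + ‖f' x - f' y‖ ^ 2 / (2 * L)) := by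
    field_simp
    ring
  rw [hhalf, inner_sub_left]
  gcongr
  linarith

end Gradient

theorem inner_add_smul_ge_of_cocoercive {E : Type*} [NormedAddCommGroup E]
    [InnerProductSpace ℝ E] {L : ℝ} (hL : 0 < L) {u a : E} (hua : ‖u‖ ^ 2 ≤ L * ⟪u, a⟫)
    (w : E) :
    ⟪w, a⟫ + ‖w‖ ^ 2 / L ≤ ⟪u + w, a + (2 / L) • w⟫ := by
  -- the cross term is absorbed by `‖u‖² + 2⟪u, w⟫ + ‖w‖² = ‖u + w‖² ≥ 0`
  have hsq : 0 ≤ (‖u‖ ^ 2 + 2 * ⟪u, w⟫ + ‖w‖ ^ 2) / L := by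
    rw [← norm_add_sq_real]
    positivity
  have hua' : ‖u‖ ^ 2 / L ≤ ⟪u, a⟫ := by
    rw [div_le_iff₀ hL]
    linarith
  rw [inner_add_left, inner_add_right, inner_add_right, inner_smul_right, inner_smul_right,
    real_inner_self_eq_norm_sq]
  have e1 : 2 / L * ⟪u, w⟫ = 2 * ⟪u, w⟫ / L := by ring
  have e2 : 2 / L * ‖w‖ ^ 2 = 2 * (‖w‖ ^ 2 / L) := by ring
  rw [add_div, add_div] at hsq
  linarith

section Saddle

variable {E F : Type*} [NormedAddCommGroup E] [InnerProductSpace ℝ E]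
  [NormedAddCommGroup F] [InnerProductSpace ℝ F]

theorem IsCocoercive.prodMap {L : ℝ} {f' : E → E} {g' : F → F} (hf : IsCocoercive L f')
    (hg : IsCocoercive L g') :
    IsCocoercive L (fun ω : WithLp 2 (E × F) => toLp 2 (f' ω.fst, g' ω.snd)) := by
  intro ω ω'
  have := add_le_add (hf ω.fst ω'.fst) (hg ω.snd ω'.snd)
  rw [prod_norm_sq_eq_of_L2, prod_inner_apply, mul_add]
  simp only [sub_fst, sub_snd, toLp_fst, toLp_snd, ofLp_sub, Prod.fst_sub, Prod.snd_sub]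
  exact this

variable [CompleteSpace E] [CompleteSpace F]

def skewCoupling (T : E →L[ℝ] F) (ω : WithLp 2 (E × F)) : WithLp 2 (E × F) :=
  toLp 2 ((T†) ω.snd, -T ω.fst)

def saddleOperator (f' : E → E) (g' : F → F) (T : E →L[ℝ] F) (ω : WithLp 2 (E × F)) :
    WithLp 2 (E × F) :=
  toLp 2 (f' ω.fst, g' ω.snd) + skewCoupling T ω

theorem saddleOperator_toLp (f' : E → E) (g' : F → F) (T : E →L[ℝ] F) (x : E) (y : F) :
    saddleOperator f' g' T (toLp 2 (x, y)) = toLp 2 (f' x + (T†) y, g' y - T x) := by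
  rw [saddleOperator, skewCoupling, ← toLp_add, Prod.mk_add_mk, ← sub_eq_add_neg]
  rfl

theorem skewCoupling_sub (T : E →L[ℝ] F) (ω ω' : WithLp 2 (E × F)) :
    skewCoupling T ω - skewCoupling T ω' = skewCoupling T (ω - ω') := by
  rw [skewCoupling, skewCoupling, skewCoupling, ← toLp_sub, sub_fst, sub_snd, map_sub, map_sub,
    Prod.mk_sub_mk, neg_sub_neg, neg_sub]

theorem inner_skewCoupling_self (T : E →L[ℝ] F) (ω : WithLp 2 (E × F)) :
    ⟪skewCoupling T ω, ω⟫ = 0 := by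
  rw [skewCoupling, prod_inner_apply]
  simp only [inner_neg_left, ContinuousLinearMap.adjoint_inner_left, real_inner_comm]
  exact add_neg_cancel _

theorem norm_skewCoupling_le (T : E →L[ℝ] F) (ω : WithLp 2 (E × F)) :
    ‖skewCoupling T ω‖ ≤ ‖T‖ * ‖ω‖ := by
  have h1 := T.le_opNorm ω.fst
  have h2 := (T†).le_opNorm ω.snd
  rw [ContinuousLinearMap.adjoint.norm_map] at h2
  rw [← abs_of_nonneg (norm_nonneg _), ← abs_of_nonneg (by positivity : 0 ≤ ‖T‖ * ‖ω‖),
    ← sq_le_sq, prod_norm_sq_eq_of_L2, mul_pow, prod_norm_sq_eq_of_L2]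
  simp only [skewCoupling, toLp_fst, toLp_snd, norm_neg]
  nlinarith [norm_nonneg (T ω.fst), norm_nonneg ((T†) ω.snd)]

theorem mul_sq_norm_le_sq_norm_skewCoupling {T : E →L[ℝ] F} {μ : ℝ}
    (hT : ∀ a, μ * ‖a‖ ^ 2 ≤ ‖T a‖ ^ 2) (hT' : ∀ b, μ * ‖b‖ ^ 2 ≤ ‖(T†) b‖ ^ 2)
    (ω : WithLp 2 (E × F)) :
    μ * ‖ω‖ ^ 2 ≤ ‖skewCoupling T ω‖ ^ 2 := by
  rw [prod_norm_sq_eq_of_L2, prod_norm_sq_eq_of_L2]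
  simp only [skewCoupling, toLp_fst, toLp_snd, norm_neg]
  linarith [hT ω.fst, hT' ω.snd]

variable {f' : E → E} {g' : F → F} {T : E →L[ℝ] F} {L μ : ℝ}

theorem div_mul_sq_norm_le_inner_saddleOperator (hL : 0 < L) (hf : IsCocoercive L f')
    (hg : IsCocoercive L g') (hT : ∀ a, μ * ‖a‖ ^ 2 ≤ ‖T a‖ ^ 2)
    (hT' : ∀ b, μ * ‖b‖ ^ 2 ≤ ‖(T†) b‖ ^ 2) (ω ω' : WithLp 2 (E × F)) :
    μ / L * ‖ω - ω'‖ ^ 2 ≤ ⟪saddleOperator f' g' T ω - saddleOperator f' g' T ω',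
      (ω - ω') + (2 / L) • skewCoupling T (ω - ω')⟫ := by
  have key := inner_add_smul_ge_of_cocoercive hL (hf.prodMap hg ω ω') (skewCoupling T (ω - ω'))
  rw [inner_skewCoupling_self, zero_add] at key
  rw [saddleOperator, saddleOperator, add_sub_add_comm, skewCoupling_sub]
  calc μ / L * ‖ω - ω'‖ ^ 2 = μ * ‖ω - ω'‖ ^ 2 / L := by ring
    _ ≤ ‖skewCoupling T (ω - ω')‖ ^ 2 / L := by
      gcongr
      exact mul_sq_norm_le_sq_norm_skewCoupling hT hT' _
    _ ≤ _ := key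

theorem mul_norm_sub_le_mul_norm_saddleOperator_sub (hL : 0 < L) (hf : IsCocoercive L f')
    (hg : IsCocoercive L g') (hT : ∀ a, μ * ‖a‖ ^ 2 ≤ ‖T a‖ ^ 2)
    (hT' : ∀ b, μ * ‖b‖ ^ 2 ≤ ‖(T†) b‖ ^ 2) (ω ω' : WithLp 2 (E × F)) :
    μ * ‖ω - ω'‖ ≤ (L + 2 * ‖T‖) * ‖saddleOperator f' g' T ω - saddleOperator f' g' T ω'‖ := by
  set δ := ω - ω'
  set Δ := saddleOperator f' g' T ω - saddleOperator f' g' T ω'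
  have hlow := div_mul_sq_norm_le_inner_saddleOperator hL hf hg hT hT' ω ω'
  have hup : ⟪Δ, δ + (2 / L) • skewCoupling T δ⟫ ≤ ‖Δ‖ * ((1 + 2 / L * ‖T‖) * ‖δ‖) := by
    refine (real_inner_le_norm _ _).trans (mul_le_mul_of_nonneg_left ?_ (norm_nonneg _))
    calc ‖δ + (2 / L) • skewCoupling T δ‖ ≤ ‖δ‖ + 2 / L * (‖T‖ * ‖δ‖) := by
          refine (norm_add_le _ _).trans ?_
          rw [norm_smul, Real.norm_of_nonneg (by positivity)]
          gcongr
          exact norm_skewCoupling_le T δ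
      _ = (1 + 2 / L * ‖T‖) * ‖δ‖ := by ring
  rcases (norm_nonneg δ).eq_or_lt with hδ | hδ
  · rw [← hδ, mul_zero]
    positivity
  · refine le_of_mul_le_mul_right ?_ hδ
    have := hlow.trans hup
    field_simp at this
    nlinarith

end Saddle

theorem adjoint_toEuclideanCLM {n : Type*} [Fintype n] [DecidableEq n] (A : Matrix n n ℝ) :
    (toEuclideanCLM (𝕜 := ℝ) A)† = toEuclideanCLM (𝕜 := ℝ) Aᵀ := by
  rw [← ContinuousLinearMap.star_eq_adjoint, ← map_star, star_eq_conjTranspose,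
    conjTranspose_eq_transpose_of_trivial]

theorem saddle_operator_inverseLipschitz_C3_general
    (n : ℕ) (Lf Lg : ℝ)
    (A : Matrix (Fin n) (Fin n) ℝ)
    (hA : 0 < lambdaMin (Aᵀ * A)) (hAA : lambdaMin (Aᵀ * A) = lambdaMin (A * Aᵀ))
    (f g : Evec n → ℝ)
    (hdf : ∀ x, HasGradientAt f (gradient f x) x)
    (hdg : ∀ y, HasGradientAt g (gradient g y) y)
    (hfconv : ∀ x x', (0 : ℝ) ≤ (inner ℝ (gradient f x - gradient f x') (x - x') : ℝ))
    (hgconv : ∀ y y', (0 : ℝ) ≤ (inner ℝ (gradient g y - gradient g y') (y - y') : ℝ))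
    (hfsmooth : ∀ x x', ‖gradient f x - gradient f x'‖ ≤ Lf * ‖x - x'‖)
    (hgsmooth : ∀ y y', ‖gradient g y - gradient g y'‖ ≤ Lg * ‖y - y'‖) :
    ∃ c > (0 : ℝ), ∀ x x' y y' : Evec n,
      c * Real.sqrt (‖x - x'‖ ^ 2 + ‖y - y'‖ ^ 2) ≤
        Real.sqrt
          (‖(gradient f x + Matrix.toEuclideanLin Aᵀ y) -
              (gradient f x' + Matrix.toEuclideanLin Aᵀ y')‖ ^ 2 +
            ‖(gradient g y - Matrix.toEuclideanLin A x) -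
              (gradient g y' - Matrix.toEuclideanLin A x')‖ ^ 2) := by
  set L := max (max Lf Lg) 1
  have hL : 0 < L := one_pos.trans_le (le_max_right _ _)
  have hf : IsCocoercive L (gradient f) := isCocoercive_of_lipschitz_gradient hdf hfconv hL
    fun x x' => (hfsmooth x x').trans (by gcongr; exact (le_max_left _ _).trans (le_max_left _ _))
  have hg : IsCocoercive L (gradient g) := isCocoercive_of_lipschitz_gradient hdg hgconv hL
    fun y y' => (hgsmooth y y').trans (by gcongr; exact (le_max_right _ _).trans (le_max_left _ _))
  set T := toEuclideanCLM (𝕜 := ℝ) A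
  have hT (a : Evec n) : lambdaMin (Aᵀ * A) * ‖a‖ ^ 2 ≤ ‖T a‖ ^ 2 :=
    lambdaMin_transpose_mul_mul_sq_norm_le A a
  have hT' (b : Evec n) : lambdaMin (Aᵀ * A) * ‖b‖ ^ 2 ≤ ‖(T†) b‖ ^ 2 := by
    have h := lambdaMin_transpose_mul_mul_sq_norm_le Aᵀ b
    rw [transpose_transpose, ← hAA] at h
    rwa [adjoint_toEuclideanCLM]
  refine ⟨lambdaMin (Aᵀ * A) / (L + 2 * ‖T‖), by positivity, fun x x' y y' => ?_⟩
  have key := mul_norm_sub_le_mul_norm_saddleOperator_sub hL hf hg hT hT' (toLp 2 (x, y))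
    (toLp 2 (x', y'))
  rw [saddleOperator_toLp, saddleOperator_toLp, adjoint_toEuclideanCLM, ← toLp_sub, ← toLp_sub,
    prod_norm_eq_of_L2, prod_norm_eq_of_L2] at key
  rw [div_mul_eq_mul_div, div_le_iff₀' (by positivity)]
  exact key

/-- Under condition C3 (`f`, `g` convex and smooth, `A` square with
`λ_min(AᵀA) = λ_min(AAᵀ) > 0`), the saddle-point operator
`F(x,y) = (∇f(x) + Aᵀy, ∇g(y) - Ax)` is inverse Lipschitz: there exists `c = 1/R₃ > 0`
with `‖F(ω) - F(ω')‖ ≥ c‖ω - ω'‖` for all `ω, ω'`. -/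
theorem saddle_operator_inverseLipschitz_C3
    (n : ℕ) (Lf Lg : ℝ) (hLf : 0 ≤ Lf) (hLg : 0 ≤ Lg)
    (A : Matrix (Fin n) (Fin n) ℝ)
    (hA : 0 < lambdaMin (Aᵀ * A)) (hAA : lambdaMin (Aᵀ * A) = lambdaMin (A * Aᵀ))
    (f g : Evec n → ℝ)
    (hdf : ∀ x, HasGradientAt f (gradient f x) x)
    (hdg : ∀ y, HasGradientAt g (gradient g y) y)
    (hfconv : ∀ x x', (0 : ℝ) ≤ (inner ℝ (gradient f x - gradient f x') (x - x') : ℝ))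
    (hgconv : ∀ y y', (0 : ℝ) ≤ (inner ℝ (gradient g y - gradient g y') (y - y') : ℝ))
    (hfsmooth : ∀ x x', ‖gradient f x - gradient f x'‖ ≤ Lf * ‖x - x'‖)
    (hgsmooth : ∀ y y', ‖gradient g y - gradient g y'‖ ≤ Lg * ‖y - y'‖) :
    ∃ c > (0 : ℝ), ∀ x x' y y' : Evec n,
      c * Real.sqrt (‖x - x'‖ ^ 2 + ‖y - y'‖ ^ 2) ≤
        Real.sqrt
          (‖(gradient f x + Matrix.toEuclideanLin Aᵀ y) -
              (gradient f x' + Matrix.toEuclideanLin Aᵀ y')‖ ^ 2 +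
            ‖(gradient g y - Matrix.toEuclideanLin A x) -
              (gradient g y' - Matrix.toEuclideanLin A x')‖ ^ 2) :=
  saddle_operator_inverseLipschitz_C3_general n Lf Lg A hA hAA f g hdf hdg hfconv hgconv hfsmooth
    hgsmooth
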